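/- The paper's triangle-density estimate is the exact sum of products of expected-adjacency entries over vertex triples: for a summary S of G (all blocks of size ≥ 2, or blocks of size < 2 having zero internal edges), Σ_{{u,v,x} ⊆ V, u,v,x distinct} Ā(u,v)·Ā(v,x)·Ā(u,x) = Σ_{i=1}^{k} [ C(n_i,3)·π_i³ + Σ_{j=i+1}^{k} ( π_{ij}²·( C(n_i,2)·n_j·π_i + C(n_j,2)·n_i·π_j ) + Σ_{l=j+1}^{k} n_i·n_j·n_l·π_{ij}·π_{jl}·π_{il} ) ], where the left-hand sum is over unordered triples of distinct vertices. -/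

import Mathlib

/-!
Setting: `A : V → V → ℝ` is the (symmetric, 0/1-valued, zero-diagonal) adjacency matrix
of a finite simple undirected graph `G = (V,E)`, and `P : V → Fin k` assigns each vertex
to its block of the partition `{V_1, …, V_k}`.  `π_i = e_i / C(n_i,2)` (interpreted as `0`
when `C(n_i,2) = 0`, which is Lean's division-by-zero convention) and
`π_{ij} = e_{ij}/(n_i n_j)`.  The sum over unordered triples `{u,v,x}` of distinct
vertices of `Ā(u,v)·Ā(v,x)·Ā(u,x)` is written as `1/6` times the corresponding sum over
ordered triples of pairwise-distinct vertices (the summand is symmetric in `u,v,x`).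

Proof idea: off the diagonal `Ā(u,v) = ρ(P u, P v)`, where `ρ` is the (symmetric) block
density, so grouping the ordered triples of distinct vertices by the blocks `(a,b,c)` they
lie in turns the left-hand side into `Σ_{a,b,c} N(a,b,c) ρ_ab ρ_bc ρ_ac`, where
`N(a,b,c) = n_a (n_b - [b = a]) (n_c - [c = a] - [c = b])` counts the triples of distinct
vertices in `V_a × V_b × V_c`. This summand is symmetric in `a, b, c`, so the sum over all
block triples is the sum over `a = b = c`, plus 3 times the sum over `a < b` of the two
patterns `(a,a,b)`, `(a,b,b)`, plus 6 times the sum over `a < b < c`; on these `N` is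
`n(n-1)(n-2) = 6 C(n,3)`, `2 C(n_a,2) n_b` (resp. `2 C(n_b,2) n_a`) and `n_a n_b n_c`.
-/

open Finset

/-- `n_i`: the number of vertices in block `i`. -/
def blockCard {V : Type*} [Fintype V] {k : ℕ} (P : V → Fin k) (i : Fin k) : ℕ :=
  (Finset.univ.filter fun v => P v = i).card

/-- `e_i`: the number of edges of `G` with both endpoints in block `i`. -/
noncomputable def eIn {V : Type*} [Fintype V] {k : ℕ} (A : V → V → ℝ) (P : V → Fin k)
    (i : Fin k) : ℝ :=
  (∑ u ∈ Finset.univ.filter (fun v => P v = i),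
      ∑ v ∈ Finset.univ.filter (fun v => P v = i), A u v) / 2

/-- `e_{ij}`: the number of edges of `G` between block `i` and block `j` (for `i ≠ j`). -/
noncomputable def eCross {V : Type*} [Fintype V] {k : ℕ} (A : V → V → ℝ) (P : V → Fin k)
    (i j : Fin k) : ℝ :=
  ∑ u ∈ Finset.univ.filter (fun v => P v = i),
    ∑ v ∈ Finset.univ.filter (fun v => P v = j), A u v

/-- `π_i = e_i / C(n_i,2)`, the internal edge density of block `i`. -/
noncomputable def piIn {V : Type*} [Fintype V] {k : ℕ} (A : V → V → ℝ) (P : V → Fin k)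
    (i : Fin k) : ℝ :=
  eIn A P i / ((blockCard P i).choose 2 : ℝ)

/-- `π_{ij} = e_{ij} / (n_i n_j)`, the cross edge density between blocks `i` and `j`. -/
noncomputable def piCross {V : Type*} [Fintype V] {k : ℕ} (A : V → V → ℝ) (P : V → Fin k)
    (i j : Fin k) : ℝ :=
  eCross A P i j / ((blockCard P i : ℝ) * (blockCard P j : ℝ))

/-- The expected adjacency matrix `Ā` of the summary determined by `P`. -/
noncomputable def Abar {V : Type*} [Fintype V] [DecidableEq V] {k : ℕ}
    (A : V → V → ℝ) (P : V → Fin k) (u v : V) : ℝ :=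
  if u = v then 0
  else if P u = P v then piIn A P (P u)
  else piCross A P (P u) (P v)

section OrderedSums

variable {ι M : Type*} [Fintype ι] [LinearOrder ι] [AddCommMonoid M]

theorem Finset.sum_eq_sum_lt_add_add_sum_gt (f : ι → M) (a : ι) :
    ∑ b, f b = ∑ b ∈ univ.filter (· < a), f b + f a + ∑ b ∈ univ.filter (a < ·), f b := by
  rw [← sum_filter_add_sum_filter_not univ (· < a), add_assoc]
  congr 1
  rw [← add_sum_erase _ _ (by simp : a ∈ univ.filter (¬ · < a))]
  congr 1
  exact sum_congr (by ext; simp; grind) fun _ _ => rfl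

theorem Finset.sum_filter_lt_eq_sum_between_add_add_sum_gt (f : ι → M) {a b : ι} (hab : a < b) :
    ∑ c ∈ univ.filter (a < ·), f c
      = ∑ c ∈ univ.filter (fun c => a < c ∧ c < b), f c + f b
        + ∑ c ∈ univ.filter (b < ·), f c := by
  rw [← sum_filter_add_sum_filter_not (univ.filter (a < ·)) (· < b), add_assoc]
  congr 1
  · exact sum_congr (by ext; simp) fun _ _ => rfl
  rw [← add_sum_erase _ _ (by simp [hab] : b ∈ (univ.filter (a < ·)).filter (¬ · < b))]
  congr 1
  exact sum_congr (by ext; simp; grind) fun _ _ => rfl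

theorem Finset.sum_sum_eq_sum_diag_add_sum_lt (f : ι → ι → M) :
    ∑ a, ∑ b, f a b = ∑ a, f a a + ∑ a, ∑ b ∈ univ.filter (a < ·), (f a b + f b a) := by
  have hswap : ∑ a, ∑ b ∈ univ.filter (· < a), f a b
      = ∑ b, ∑ a ∈ univ.filter (b < ·), f a b :=
    sum_comm' (by simp)
  simp only [sum_add_distrib]
  rw [sum_congr rfl fun a _ => sum_eq_sum_lt_add_add_sum_gt (f a) a,
    sum_add_distrib, sum_add_distrib, hswap]
  abel

theorem Finset.sum_sum_sum_eq_of_symmetric (F : ι → ι → ι → M)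
    (h12 : ∀ a b c, F a b c = F b a c) (h23 : ∀ a b c, F a b c = F a c b) :
    ∑ a, ∑ b, ∑ c, F a b c
      = ∑ a, F a a a + 3 • ∑ a, ∑ b ∈ univ.filter (a < ·), (F a a b + F a b b)
        + 6 • ∑ a, ∑ b ∈ univ.filter (a < ·), ∑ c ∈ univ.filter (b < ·), F a b c := by
  set D := ∑ a, ∑ b ∈ univ.filter (a < ·), (F a a b + F a b b)
  set T := ∑ a, ∑ b ∈ univ.filter (a < ·), ∑ c ∈ univ.filter (b < ·), F a b c
  have hdiag : ∑ a, ∑ c, F a a c = ∑ a, F a a a + D := by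
    rw [sum_sum_eq_sum_diag_add_sum_lt]
    congr 1
    refine sum_congr rfl fun a _ => sum_congr rfl fun b _ => ?_
    rw [h23 b b a, h12 b a b]
  have hlow : ∑ a, ∑ b ∈ univ.filter (a < ·), ∑ c ∈ univ.filter (· < a), F a b c = T := by
    rw [sum_congr rfl fun a _ => sum_comm,
      sum_comm' (t' := univ) (s' := fun c => univ.filter (c < ·)) (by simp)]
    refine sum_congr rfl fun c _ => sum_congr rfl fun a _ =>
      sum_congr rfl fun b _ => ?_
    rw [h23, h12]
  have hmid : ∑ a, ∑ b ∈ univ.filter (a < ·), ∑ c ∈ univ.filter (fun c => a < c ∧ c < b),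
      F a b c = T := by
    refine sum_congr rfl fun a _ => ?_
    rw [sum_comm' (t' := univ.filter (a < ·)) (s' := fun c => univ.filter (c < ·))
      (by intro b c; simp; grind)]
    exact sum_congr rfl fun c _ => sum_congr rfl fun b _ => h23 a b c
  have hoff : ∑ a, ∑ b ∈ univ.filter (a < ·), ∑ c, F a b c = D + 3 • T := by
    have hsplit : ∀ a, ∀ b ∈ univ.filter (a < ·), ∑ c, F a b c
        = (∑ c ∈ univ.filter (· < a), F a b c + F a a b
          + ∑ c ∈ univ.filter (fun c => a < c ∧ c < b), F a b c + F a b b)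
          + ∑ c ∈ univ.filter (b < ·), F a b c := by
      intro a b hb
      rw [sum_eq_sum_lt_add_add_sum_gt _ a,
        sum_filter_lt_eq_sum_between_add_add_sum_gt _ (mem_filter.1 hb).2, h23 a b a]
      abel
    simp only [sum_congr rfl (hsplit _), sum_add_distrib]
    rw [hlow, hmid]
    simp only [D, T, sum_add_distrib]
    abel
  calc ∑ a, ∑ b, ∑ c, F a b c
      = ∑ a, ∑ c, F a a c + 2 • ∑ a, ∑ b ∈ univ.filter (a < ·), ∑ c, F a b c := by
        rw [sum_sum_eq_sum_diag_add_sum_lt, smul_sum]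
        congr 1
        refine sum_congr rfl fun a _ => ?_
        rw [smul_sum]
        refine sum_congr rfl fun b _ => ?_
        rw [two_nsmul]
        congr 1
        exact sum_congr rfl fun c _ => h12 b a c
    _ = _ := by rw [hdiag, hoff]; abel

end OrderedSums

theorem Nat.cast_choose_three {K : Type*} [Field K] [CharZero K] (m : ℕ) :
    (m.choose 3 : K) = m * (m - 1) * (m - 2) / 6 := by
  induction m with
  | zero => simp
  | succ n ih =>
    rw [Nat.choose_succ_succ, Nat.cast_add, Nat.cast_choose_two, ih]
    push_cast
    ring

section Blocks

variable {V : Type*} [Fintype V] {k : ℕ}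

theorem sum_comp_eq_sum_blockCard_mul {R : Type*} [NonAssocSemiring R] (P : V → Fin k)
    (f : Fin k → R) : ∑ u, f (P u) = ∑ a, (blockCard P a : R) * f a := by
  rw [← sum_fiberwise univ P fun u => f (P u)]
  refine sum_congr rfl fun a _ => ?_
  rw [sum_congr rfl fun u hu => congrArg f (mem_filter.1 hu).2, sum_const, nsmul_eq_mul]
  rfl

def distinctTripleCount (P : V → Fin k) (a b c : Fin k) : ℝ :=
  blockCard P a * ((blockCard P b : ℝ) - if b = a then 1 else 0)
    * ((blockCard P c : ℝ) - (if c = a then 1 else 0) - if c = b then 1 else 0)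

theorem distinctTripleCount_swap₁₂ (P : V → Fin k) (a b c : Fin k) :
    distinctTripleCount P a b c = distinctTripleCount P b a c := by
  unfold distinctTripleCount
  by_cases hab : a = b
  · subst hab; rfl
  · simp only [hab, Ne.symm hab, if_false]
    ring

theorem distinctTripleCount_swap₂₃ (P : V → Fin k) (a b c : Fin k) :
    distinctTripleCount P a b c = distinctTripleCount P a c b := by
  unfold distinctTripleCount
  by_cases hbc : b = c
  · subst hbc; rfl
  · simp only [hbc, Ne.symm hbc, if_false]
    ring

noncomputable def blockDensity (A : V → V → ℝ) (P : V → Fin k) (a b : Fin k) : ℝ :=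
  if a = b then piIn A P a else piCross A P a b

theorem blockDensity_comm {A : V → V → ℝ} (hA : ∀ u v, A u v = A v u) (P : V → Fin k)
    (a b : Fin k) : blockDensity A P a b = blockDensity A P b a := by
  unfold blockDensity piCross eCross
  by_cases hab : a = b
  · subst hab; rfl
  · rw [if_neg hab, if_neg (Ne.symm hab), sum_comm, mul_comm]
    simp only [hA]

noncomputable def blockTripleSum (A : V → V → ℝ) (P : V → Fin k) (a b c : Fin k) : ℝ :=
  distinctTripleCount P a b c
    * (blockDensity A P a b * blockDensity A P b c * blockDensity A P a c)

theorem blockTripleSum_swap₁₂ {A : V → V → ℝ} (hA : ∀ u v, A u v = A v u) (P : V → Fin k)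
    (a b c : Fin k) : blockTripleSum A P a b c = blockTripleSum A P b a c := by
  simp only [blockTripleSum, distinctTripleCount_swap₁₂ P a b c, blockDensity_comm hA P a b]
  ring

theorem blockTripleSum_swap₂₃ {A : V → V → ℝ} (hA : ∀ u v, A u v = A v u) (P : V → Fin k)
    (a b c : Fin k) : blockTripleSum A P a b c = blockTripleSum A P a c b := by
  simp only [blockTripleSum, distinctTripleCount_swap₂₃ P a b c, blockDensity_comm hA P b c]
  ring

theorem blockTripleSum_self (A : V → V → ℝ) (P : V → Fin k) (a : Fin k) :
    blockTripleSum A P a a a = 6 * ((blockCard P a).choose 3 : ℝ) * piIn A P a ^ 3 := by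
  simp only [blockTripleSum, distinctTripleCount, blockDensity, if_true, Nat.cast_choose_three]
  ring

theorem blockTripleSum_pair (A : V → V → ℝ) (P : V → Fin k) {a b : Fin k} (hab : a ≠ b) :
    blockTripleSum A P a a b + blockTripleSum A P a b b
      = 2 * (piCross A P a b ^ 2 * (((blockCard P a).choose 2 : ℝ) * blockCard P b * piIn A P a
          + ((blockCard P b).choose 2 : ℝ) * blockCard P a * piIn A P b)) := by
  simp only [blockTripleSum, distinctTripleCount, blockDensity, if_true, hab, Ne.symm hab,
    if_false, Nat.cast_choose_two]
  ring

theorem blockTripleSum_of_ne (A : V → V → ℝ) (P : V → Fin k) {a b c : Fin k} (hab : a ≠ b)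
    (hbc : b ≠ c) (hac : a ≠ c) :
    blockTripleSum A P a b c = blockCard P a * blockCard P b * blockCard P c
      * piCross A P a b * piCross A P b c * piCross A P a c := by
  simp only [blockTripleSum, distinctTripleCount, blockDensity, hab, hbc, hac, Ne.symm hab,
    Ne.symm hbc, Ne.symm hac, if_false]
  ring

variable [DecidableEq V]

theorem sum_erase_comp_eq {R : Type*} [Ring R] (P : V → Fin k) (f : Fin k → R) (u : V) :
    ∑ v ∈ univ.erase u, f (P v)
      = ∑ b, ((blockCard P b : R) - if b = P u then 1 else 0) * f b := by
  rw [sum_erase_eq_sub (mem_univ u), sum_comp_eq_sum_blockCard_mul]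
  simp [sub_mul, sum_sub_distrib]

theorem sum_erase_erase_comp_eq {R : Type*} [Ring R] (P : V → Fin k) (f : Fin k → R)
    {u v : V} (hvu : v ≠ u) :
    ∑ x ∈ (univ.erase u).erase v, f (P x)
      = ∑ c, ((blockCard P c : R) - (if c = P u then 1 else 0) - if c = P v then 1 else 0)
          * f c := by
  rw [sum_erase_eq_sub (mem_erase.2 ⟨hvu, mem_univ v⟩), sum_erase_comp_eq]
  simp [sub_mul, sum_sub_distrib]

theorem sum_distinct_triples_comp_eq (P : V → Fin k) (G : Fin k → Fin k → Fin k → ℝ) :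
    ∑ u, ∑ v ∈ univ.erase u, ∑ x ∈ (univ.erase u).erase v, G (P u) (P v) (P x)
      = ∑ a, ∑ b, ∑ c, distinctTripleCount P a b c * G a b c := by
  symm
  simp only [distinctTripleCount, mul_assoc, ← mul_sum]
  rw [← sum_comp_eq_sum_blockCard_mul]
  simp only [← sum_erase_comp_eq]
  exact sum_congr rfl fun u _ => sum_congr rfl fun v hv =>
    (sum_erase_erase_comp_eq P _ (ne_of_mem_erase hv)).symm

theorem Abar_of_ne (A : V → V → ℝ) (P : V → Fin k) {u v : V} (huv : u ≠ v) :
    Abar A P u v = blockDensity A P (P u) (P v) := by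
  simp [Abar, blockDensity, huv]

theorem sum_distinct_triples_Abar (A : V → V → ℝ) (P : V → Fin k) :
    ∑ u, ∑ v ∈ univ.erase u, ∑ x ∈ (univ.erase u).erase v,
        Abar A P u v * Abar A P v x * Abar A P u x
      = ∑ a, ∑ b, ∑ c, blockTripleSum A P a b c := by
  simp only [blockTripleSum]
  rw [← sum_distinct_triples_comp_eq P fun a b c =>
    blockDensity A P a b * blockDensity A P b c * blockDensity A P a c]
  refine sum_congr rfl fun u _ => sum_congr rfl fun v hv => sum_congr rfl fun x hx => ?_
  obtain ⟨hxv, hxu⟩ : x ≠ v ∧ x ≠ u := by simpa using hx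
  rw [Abar_of_ne A P (ne_of_mem_erase hv).symm, Abar_of_ne A P hxv.symm,
    Abar_of_ne A P hxu.symm]

end Blocks

theorem triangle_estimate_closed_form_general {V : Type*} [Fintype V] [DecidableEq V] {k : ℕ}
    (A : V → V → ℝ) (P : V → Fin k)
    (hsym : ∀ u v, A u v = A v u) :
    (1 / 6 : ℝ) * ∑ u : V, ∑ v ∈ Finset.univ.erase u, ∑ x ∈ (Finset.univ.erase u).erase v,
        Abar A P u v * Abar A P v x * Abar A P u x
      = ∑ i : Fin k,
          (((blockCard P i).choose 3 : ℝ) * (piIn A P i) ^ 3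
            + ∑ j ∈ Finset.univ.filter (fun j : Fin k => i < j),
                ((piCross A P i j) ^ 2 *
                    (((blockCard P i).choose 2 : ℝ) * (blockCard P j : ℝ) * piIn A P i
                      + ((blockCard P j).choose 2 : ℝ) * (blockCard P i : ℝ) * piIn A P j)
                  + ∑ l ∈ Finset.univ.filter (fun l : Fin k => j < l),
                      (blockCard P i : ℝ) * (blockCard P j : ℝ) * (blockCard P l : ℝ)
                        * piCross A P i j * piCross A P j l * piCross A P i l)) := by
  rw [sum_distinct_triples_Abar, sum_sum_sum_eq_of_symmetric _ (blockTripleSum_swap₁₂ hsym P)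
    (blockTripleSum_swap₂₃ hsym P)]
  have hpair : ∀ a, ∀ b ∈ univ.filter (a < ·), _ := fun a b hb =>
    blockTripleSum_pair A P (mem_filter.1 hb).2.ne
  have htriple : ∀ a, ∀ b ∈ univ.filter (a < ·), ∀ c ∈ univ.filter (b < ·), _ :=
    fun a b hb c hc => blockTripleSum_of_ne A P (mem_filter.1 hb).2.ne (mem_filter.1 hc).2.ne
      ((mem_filter.1 hb).2.trans (mem_filter.1 hc).2).ne
  simp only [blockTripleSum_self, nsmul_eq_mul, sum_congr rfl fun a _ => sum_congr rfl (hpair a),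
    sum_congr rfl fun a _ => sum_congr rfl fun b hb => sum_congr rfl (htriple a b hb)]
  simp only [mul_add, mul_sum, sum_add_distrib]
  ring_nf

/-- The paper's triangle-density estimate is the exact sum of products of
expected-adjacency entries over unordered triples of distinct vertices. -/
theorem triangle_estimate_closed_form {V : Type*} [Fintype V] [DecidableEq V] {k : ℕ}
    (A : V → V → ℝ) (P : V → Fin k)
    (hsym : ∀ u v, A u v = A v u)
    (h01 : ∀ u v, A u v = 0 ∨ A u v = 1)
    (hdiag : ∀ u, A u u = 0)
    (hnd : ∀ i : Fin k, eIn A P i ≠ 0 → 2 ≤ blockCard P i) :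
    (1 / 6 : ℝ) * ∑ u : V, ∑ v ∈ Finset.univ.erase u, ∑ x ∈ (Finset.univ.erase u).erase v,
        Abar A P u v * Abar A P v x * Abar A P u x
      = ∑ i : Fin k,
          (((blockCard P i).choose 3 : ℝ) * (piIn A P i) ^ 3
            + ∑ j ∈ Finset.univ.filter (fun j : Fin k => i < j),
                ((piCross A P i j) ^ 2 *
                    (((blockCard P i).choose 2 : ℝ) * (blockCard P j : ℝ) * piIn A P i
                      + ((blockCard P j).choose 2 : ℝ) * (blockCard P i : ℝ) * piIn A P j)
                  + ∑ l ∈ Finset.univ.filter (fun l : Fin k => j < l),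
                      (blockCard P i : ℝ) * (blockCard P j : ℝ) * (blockCard P l : ℝ)
                        * piCross A P i j * piCross A P j l * piCross A P i l)) :=
  triangle_estimate_closed_form_general A P hsym
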